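/- For A, B ∈ SU(2), the following are equivalent: (i) there exists U ∈ SU(2) such that U·A·U⁻¹ and U·B·U⁻¹ each lie in Pin(2) (i.e., each is diagonal or antidiagonal), and A·B ≠ B·A; (ii) tr(A·B·A⁻¹·B⁻¹) ≠ 2 and at least two of the three real numbers tr A, tr B, tr(A·B) are zero. -/
import Mathlib


/-- `SU(2)`: the subgroup of the `2 × 2` complex unitary group consisting of the
matrices of determinant one. -/
noncomputable def SU2 : Subgroup (Matrix.unitaryGroup (Fin 2) ℂ) where
  carrier := {A | Matrix.det (A : Matrix (Fin 2) (Fin 2) ℂ) = 1}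
  mul_mem' := by
    intro a b ha hb
    simp only [Set.mem_setOf_eq, Matrix.UnitaryGroup.mul_val, Matrix.det_mul] at *
    rw [ha, hb, mul_one]
  one_mem' := by simp
  inv_mem' := by
    intro a ha
    simp only [Set.mem_setOf_eq, Matrix.UnitaryGroup.inv_val] at *
    show Matrix.det (star a.val) = 1
    rw [Matrix.star_eq_conjTranspose, Matrix.det_conjTranspose, ha, star_one]

/-- The underlying `2 × 2` complex matrix of an element of `SU(2)`. -/
noncomputable def matSU (A : SU2) : Matrix (Fin 2) (Fin 2) ℂ :=
  ((A : Matrix.unitaryGroup (Fin 2) ℂ) : Matrix (Fin 2) (Fin 2) ℂ)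

/-- The trace of an element of `SU(2)`, as a real number. -/
noncomputable def trSU (A : SU2) : ℝ := (Matrix.trace (matSU A)).re

/-- A `2 × 2` matrix is antidiagonal if both diagonal entries vanish. -/
def IsAntidiag (M : Matrix (Fin 2) (Fin 2) ℂ) : Prop := M 0 0 = 0 ∧ M 1 1 = 0

/-- Membership in `Pin(2)`: the matrix is diagonal or antidiagonal. -/
def InPin2 (M : Matrix (Fin 2) (Fin 2) ℂ) : Prop := M.IsDiag ∨ IsAntidiag M

open Matrix Complex

local notation "conj'" => starRingEnd ℂ

lemma matSU_mul (X Y : SU2) : matSU (X * Y) = matSU X * matSU Y := rfl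

lemma matSU_one : matSU 1 = 1 := rfl

lemma matSU_inv (X : SU2) : matSU X⁻¹ = star (matSU X) := rfl

lemma matSU_inj {X Y : SU2} (h : matSU X = matSU Y) : X = Y := by
  apply Subtype.ext; apply Subtype.ext; exact h

lemma su2_entries (X : SU2) :
    matSU X 1 1 = conj' (matSU X 0 0) ∧ matSU X 1 0 = -conj' (matSU X 0 1) ∧
      Complex.normSq (matSU X 0 0) + Complex.normSq (matSU X 0 1) = 1 := by
  have hdet : Matrix.det (matSU X) = 1 := X.2
  have hmem : (matSU X) ∈ Matrix.unitaryGroup (Fin 2) ℂ := (X : Matrix.unitaryGroup (Fin 2) ℂ).2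
  have h2 : matSU X * star (matSU X) = 1 := (Unitary.mem_iff.mp hmem).2
  have hinv : (matSU X)⁻¹ = star (matSU X) := Matrix.inv_eq_right_inv h2
  have hadj : (matSU X)⁻¹ = Matrix.adjugate (matSU X) := by
    rw [Matrix.inv_def, hdet]; simp
  have key : star (matSU X) = Matrix.adjugate (matSU X) := by rw [← hinv, hadj]
  have e00 : conj' (matSU X 0 0) = matSU X 1 1 := by
    have := congrFun (congrFun key 0) 0
    simpa [Matrix.adjugate_fin_two, Matrix.star_eq_conjTranspose, Matrix.conjTranspose_apply] using this
  have e10 : conj' (matSU X 0 1) = -(matSU X 1 0) := by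
    have := congrFun (congrFun key 1) 0
    simpa [Matrix.adjugate_fin_two, Matrix.star_eq_conjTranspose, Matrix.conjTranspose_apply] using this
  refine ⟨e00.symm, ?_, ?_⟩
  · rw [e10]; ring
  · have : matSU X 0 0 * matSU X 1 1 - matSU X 0 1 * matSU X 1 0 = 1 := by
      rw [← Matrix.det_fin_two]; exact hdet
    have h10 : matSU X 1 0 = -conj' (matSU X 0 1) := by
      rw [e10]; ring
    rw [← e00, h10] at this
    have := congrArg Complex.re this
    simp [Complex.mul_conj, Complex.normSq] at this
    simp [Complex.normSq]
    linarith

lemma matSU_eq (X : SU2) :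
    matSU X = !![matSU X 0 0, matSU X 0 1; -conj' (matSU X 0 1), conj' (matSU X 0 0)] := by
  obtain ⟨h11, h10, -⟩ := su2_entries X
  ext i j
  fin_cases i <;> fin_cases j <;> simp [h11, h10]

lemma su2_ext {X Y : SU2} (h0 : matSU X 0 0 = matSU Y 0 0) (h1 : matSU X 0 1 = matSU Y 0 1) :
    X = Y := by
  apply matSU_inj
  rw [matSU_eq X, matSU_eq Y, h0, h1]

lemma trSU_eq (X : SU2) : trSU X = 2 * (matSU X 0 0).re := by
  obtain ⟨h11, -, -⟩ := su2_entries X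
  simp [trSU, Matrix.trace, Matrix.diag, Fin.sum_univ_two, h11]
  ring

lemma trSU_eq_two_iff (X : SU2) : trSU X = 2 ↔ X = 1 := by
  constructor
  · intro h
    obtain ⟨-, -, hn⟩ := su2_entries X
    rw [trSU_eq] at h
    have hre : (matSU X 0 0).re = 1 := by linarith
    have him : (matSU X 0 0).im = 0 ∧ Complex.normSq (matSU X 0 1) = 0 := by
      constructor <;> nlinarith [Complex.normSq_apply (matSU X 0 0), Complex.normSq_nonneg (matSU X 0 1), Complex.normSq_apply (matSU X 0 1), sq_nonneg (matSU X 0 0).im]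
    have h00 : matSU X 0 0 = 1 := Complex.ext (by simp [hre]) (by simp [him.1])
    have h01 : matSU X 0 1 = 0 := by
      rw [← Complex.normSq_eq_zero]; exact him.2
    apply su2_ext (Y := 1) <;> simp [h00, h01, matSU_one, Matrix.one_apply]
  · rintro rfl
    simp [trSU_eq, matSU_one, Matrix.one_apply]

lemma trSU_conj_inv (U X : SU2) : trSU (U * X * U⁻¹) = trSU X := by
  unfold trSU
  rw [mul_assoc, matSU_mul, Matrix.trace_mul_comm, ← matSU_mul]
  congr 2
  group

lemma comm_iff (X Y : SU2) : trSU (X * Y * X⁻¹ * Y⁻¹) = 2 ↔ X * Y = Y * X := by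
  rw [trSU_eq_two_iff]
  have h : X * Y * X⁻¹ * Y⁻¹ = (X * Y) * (Y * X)⁻¹ := by group
  rw [h, mul_inv_eq_one]

lemma isDiag_iff (X : SU2) : (matSU X).IsDiag ↔ matSU X 0 1 = 0 := by
  obtain ⟨-, h10, -⟩ := su2_entries X
  constructor
  · intro h; exact h (by decide : (0 : Fin 2) ≠ 1)
  · intro h i j hij
    fin_cases i <;> fin_cases j <;> simp_all

lemma isAntidiag_iff (X : SU2) : IsAntidiag (matSU X) ↔ matSU X 0 0 = 0 := by
  obtain ⟨h11, -, -⟩ := su2_entries X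
  constructor
  · intro h; exact h.1
  · intro h; exact ⟨h, by simp [h11, h]⟩

noncomputable def toSU2 (a b : ℂ) (h : Complex.normSq a + Complex.normSq b = 1) : SU2 := by
  refine ⟨⟨!![a, b; -conj' b, conj' a], ?_⟩, ?_⟩
  · rw [Matrix.mem_unitaryGroup_iff]
    ext i j
    have h' : a * conj' a + b * conj' b = 1 := by
      rw [Complex.mul_conj, Complex.mul_conj, ← Complex.ofReal_add, h, Complex.ofReal_one]
    fin_cases i <;> fin_cases j <;>
      (simp [Matrix.mul_apply, Fin.sum_univ_two, Matrix.star_eq_conjTranspose,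
        Matrix.conjTranspose_apply, Matrix.one_apply, mul_comm]
       try linear_combination h')
  · show Matrix.det _ = 1
    rw [Matrix.det_fin_two_of]
    have h' : a * conj' a + b * conj' b = 1 := by
      rw [Complex.mul_conj, Complex.mul_conj, ← Complex.ofReal_add, h, Complex.ofReal_one]
    linear_combination h'

lemma matSU_toSU2 (a b : ℂ) (h : Complex.normSq a + Complex.normSq b = 1) :
    matSU (toSU2 a b h) = !![a, b; -conj' b, conj' a] := rfl

lemma conj_entries (u w : ℂ) (h : Complex.normSq u + Complex.normSq w = 1) (X : SU2) :
    matSU (toSU2 u w h * X * (toSU2 u w h)⁻¹) 0 0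
      = matSU X 0 0 * u * conj' u - conj' (matSU X 0 1) * w * conj' u
        + matSU X 0 1 * u * conj' w + conj' (matSU X 0 0) * w * conj' w
  ∧ matSU (toSU2 u w h * X * (toSU2 u w h)⁻¹) 0 1
      = matSU X 0 1 * u ^ 2 + conj' (matSU X 0 1) * w ^ 2
        + (conj' (matSU X 0 0) - matSU X 0 0) * u * w := by
  rw [matSU_mul, matSU_mul, matSU_inv, matSU_toSU2]
  rw [matSU_eq X]
  constructor <;>
    (simp [Matrix.mul_apply, Fin.sum_univ_two, Matrix.star_eq_conjTranspose,
      Matrix.conjTranspose_apply]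
     ring)

lemma construct (m₁ m₂ m₃ r : ℝ) (hr : r ^ 2 = m₁ ^ 2 + m₂ ^ 2 + m₃ ^ 2)
    (hpos : 0 < r + m₁) :
    ∃ U : SU2,
      (∀ X : SU2, (matSU X 0 0).re = 0 →
        (matSU X 0 0).im * m₁ + (matSU X 0 1).re * m₂ + (matSU X 0 1).im * m₃ = 0 →
        matSU (U * X * U⁻¹) 0 0 = 0) ∧
      (∀ X : SU2, (matSU X 0 0).im = m₁ → (matSU X 0 1).re = m₂ → (matSU X 0 1).im = m₃ →
        matSU (U * X * U⁻¹) 0 1 = 0) := by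
  have hr0 : 0 < r := by nlinarith [sq_nonneg (r - m₁), sq_nonneg m₂, sq_nonneg m₃]
  set s : ℝ := Real.sqrt (2 * r * (r + m₁)) with hs_def
  have hs2 : s ^ 2 = 2 * r * (r + m₁) := Real.sq_sqrt (by positivity)
  have hs0 : 0 < s := Real.sqrt_pos.mpr (by positivity)
  have hsne : s ≠ 0 := ne_of_gt hs0
  set u : ℂ := (((r + m₁) / s : ℝ) : ℂ) with hu_def
  set w : ℂ := ((m₃ / s : ℝ) : ℂ) - ((m₂ / s : ℝ) : ℂ) * Complex.I with hw_def
  have hnorm : Complex.normSq u + Complex.normSq w = 1 := by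
    simp [hu_def, hw_def, Complex.normSq_apply]
    field_simp
    nlinarith [hs2]
  refine ⟨toSU2 u w hnorm, ?_, ?_⟩
  · intro X hre horth
    obtain ⟨e00, -⟩ := conj_entries u w hnorm X
    rw [e00]
    simp only [hu_def, hw_def]
    rw [Complex.ext_iff]
    constructor <;>
      simp only [Complex.mul_re, Complex.mul_im, Complex.add_re, Complex.add_im,
        Complex.sub_re, Complex.sub_im, Complex.conj_re, Complex.conj_im,
        Complex.ofReal_re, Complex.ofReal_im, Complex.I_re, Complex.I_im,
        Complex.neg_re, Complex.neg_im, Complex.zero_re, Complex.zero_im, _root_.map_sub, _root_.map_mul, Complex.conj_ofReal,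
        Complex.conj_I]
    · linear_combination (((r + m₁) ^ 2 + m₂ ^ 2 + m₃ ^ 2) / s ^ 2) * hre
    · linear_combination (2 * (r + m₁) / s ^ 2) * horth + ((matSU X 0 0).im / s ^ 2) * hr
  · intro X him hbre hbim
    obtain ⟨-, e01⟩ := conj_entries u w hnorm X
    rw [e01]
    simp only [hu_def, hw_def]
    rw [Complex.ext_iff]
    constructor <;>
      simp only [Complex.mul_re, Complex.mul_im, Complex.add_re, Complex.add_im,
        Complex.sub_re, Complex.sub_im, Complex.conj_re, Complex.conj_im,
        Complex.ofReal_re, Complex.ofReal_im, Complex.I_re, Complex.I_im,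
        Complex.neg_re, Complex.neg_im, Complex.zero_re, Complex.zero_im, _root_.map_sub,
        _root_.map_mul, Complex.conj_ofReal,
        Complex.conj_I, pow_two, him, hbre, hbim]
    · linear_combination (m₂ / s ^ 2) * hr
    · linear_combination (m₃ / s ^ 2) * hr

lemma mul00 (X Y : SU2) :
    matSU (X * Y) 0 0 = matSU X 0 0 * matSU Y 0 0 - matSU X 0 1 * conj' (matSU Y 0 1) := by
  obtain ⟨-, h10, -⟩ := su2_entries Y
  rw [matSU_mul]
  simp [Matrix.mul_apply, Fin.sum_univ_two, h10]
  ring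

lemma mul01 (X Y : SU2) :
    matSU (X * Y) 0 1 = matSU X 0 0 * matSU Y 0 1 + matSU X 0 1 * conj' (matSU Y 0 0) := by
  obtain ⟨h11, -, -⟩ := su2_entries Y
  rw [matSU_mul]
  simp [Matrix.mul_apply, Fin.sum_univ_two, h11]

lemma commute_of_diag {X Y : SU2} (hX : matSU X 0 1 = 0) (hY : matSU Y 0 1 = 0) :
    X * Y = Y * X := by
  apply su2_ext
  · rw [mul00, mul00, hX, hY]; ring
  · rw [mul01, mul01, hX, hY]; ring

lemma commute_of_scalar {X : SU2} (h01 : matSU X 0 1 = 0) (him : (matSU X 0 0).im = 0)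
    (Y : SU2) : X * Y = Y * X := by
  have hc : conj' (matSU X 0 0) = matSU X 0 0 := Complex.conj_eq_iff_im.mpr him
  apply su2_ext
  · rw [mul00, mul00, h01]; simp [hc]; ring
  · rw [mul01, mul01, h01, hc]; ring

lemma commute_of_cross_zero {X Y : SU2} (hX : (matSU X 0 0).re = 0) (hY : (matSU Y 0 0).re = 0)
    (h1 : (matSU X 0 1).re * (matSU Y 0 1).im - (matSU X 0 1).im * (matSU Y 0 1).re = 0)
    (h2 : (matSU X 0 1).im * (matSU Y 0 0).im - (matSU X 0 0).im * (matSU Y 0 1).im = 0)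
    (h3 : (matSU X 0 0).im * (matSU Y 0 1).re - (matSU X 0 1).re * (matSU Y 0 0).im = 0) :
    X * Y = Y * X := by
  apply su2_ext
  · rw [mul00, mul00]
    rw [Complex.ext_iff]
    constructor <;>
      simp only [Complex.mul_re, Complex.mul_im, Complex.sub_re, Complex.sub_im,
        Complex.conj_re, Complex.conj_im, hX, hY] <;>
      linarith
  · rw [mul01, mul01]
    rw [Complex.ext_iff]
    constructor <;>
      simp only [Complex.mul_re, Complex.mul_im, Complex.add_re, Complex.add_im,
        Complex.conj_re, Complex.conj_im, hX, hY] <;>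
      linarith

lemma conj_conj_eq {U X Y : SU2} (h : (U * X * U⁻¹) * (U * Y * U⁻¹) = (U * Y * U⁻¹) * (U * X * U⁻¹)) :
    X * Y = Y * X := by
  have h2 : U * (X * Y) * U⁻¹ = U * (Y * X) * U⁻¹ := by
    calc U * (X * Y) * U⁻¹ = (U * X * U⁻¹) * (U * Y * U⁻¹) := by group
    _ = (U * Y * U⁻¹) * (U * X * U⁻¹) := h
    _ = U * (Y * X) * U⁻¹ := by group
  have := congrArg (fun Z => U⁻¹ * Z * U) h2
  simpa [mul_assoc] using this

lemma mul_conj_eq (U X Y : SU2) :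
    (U * X * U⁻¹) * (U * Y * U⁻¹) = U * (X * Y) * U⁻¹ := by group

lemma case_both_pure (A B : SU2) (hne : A * B ≠ B * A)
    (hA : (matSU A 0 0).re = 0) (hB : (matSU B 0 0).re = 0) :
    ∃ U : SU2, InPin2 (matSU (U * A * U⁻¹)) ∧ InPin2 (matSU (U * B * U⁻¹)) := by
  set m₁ := (matSU A 0 1).re * (matSU B 0 1).im - (matSU A 0 1).im * (matSU B 0 1).re with hm₁
  set m₂ := (matSU A 0 1).im * (matSU B 0 0).im - (matSU A 0 0).im * (matSU B 0 1).im with hm₂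
  set m₃ := (matSU A 0 0).im * (matSU B 0 1).re - (matSU A 0 1).re * (matSU B 0 0).im with hm₃
  have hsum : (0:ℝ) ≤ m₁ ^ 2 + m₂ ^ 2 + m₃ ^ 2 := by positivity
  set r := Real.sqrt (m₁ ^ 2 + m₂ ^ 2 + m₃ ^ 2) with hrdef
  have hr : r ^ 2 = m₁ ^ 2 + m₂ ^ 2 + m₃ ^ 2 := Real.sq_sqrt hsum
  have horthA : (matSU A 0 0).im * m₁ + (matSU A 0 1).re * m₂ + (matSU A 0 1).im * m₃ = 0 := by
    rw [hm₁, hm₂, hm₃]; ring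
  have horthB : (matSU B 0 0).im * m₁ + (matSU B 0 1).re * m₂ + (matSU B 0 1).im * m₃ = 0 := by
    rw [hm₁, hm₂, hm₃]; ring
  by_cases hpos : 0 < r + m₁
  · obtain ⟨U, hanti, -⟩ := construct m₁ m₂ m₃ r hr hpos
    exact ⟨U, Or.inr ((isAntidiag_iff _).mpr (hanti A hA horthA)),
      Or.inr ((isAntidiag_iff _).mpr (hanti B hB horthB))⟩
  · by_cases hzero : m₁ = 0 ∧ m₂ = 0 ∧ m₃ = 0
    · exact absurd (commute_of_cross_zero hA hB hzero.1 hzero.2.1 hzero.2.2) hne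
    · have h1 : m₁ ^ 2 + m₂ ^ 2 + m₃ ^ 2 ≠ 0 := by
        intro h
        exact hzero ⟨by nlinarith [sq_nonneg m₁, sq_nonneg m₂, sq_nonneg m₃],
          by nlinarith [sq_nonneg m₁, sq_nonneg m₂, sq_nonneg m₃],
          by nlinarith [sq_nonneg m₁, sq_nonneg m₂, sq_nonneg m₃]⟩
      have hrpos : 0 < r := Real.sqrt_pos.mpr (lt_of_le_of_ne hsum (Ne.symm h1))
      have hm₁neg : m₁ ≤ -r := by linarith [not_lt.mp hpos]
      have hm₁sq : r ^ 2 ≤ m₁ ^ 2 := by nlinarith [hrpos, hm₁neg]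
      have h2sq : m₂ ^ 2 = 0 := by linarith [sq_nonneg m₂, sq_nonneg m₃, hr, hm₁sq]
      have h3sq : m₃ ^ 2 = 0 := by linarith [sq_nonneg m₂, sq_nonneg m₃, hr, hm₁sq]
      have h2 : m₂ = 0 := by
        have := sq_eq_zero_iff.mp h2sq; exact this
      have h3 : m₃ = 0 := by
        have := sq_eq_zero_iff.mp h3sq; exact this
      have hm₁ne : m₁ ≠ 0 := fun h => hzero ⟨h, h2, h3⟩
      have hαA : (matSU A 0 0).im = 0 := by
        rw [h2, h3] at horthA
        simp at horthA
        rcases horthA with h | h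
        · exact h
        · exact absurd h hm₁ne
      have hαB : (matSU B 0 0).im = 0 := by
        rw [h2, h3] at horthB
        simp at horthB
        rcases horthB with h | h
        · exact h
        · exact absurd h hm₁ne
      have hA0 : matSU A 0 0 = 0 := Complex.ext hA hαA
      have hB0 : matSU B 0 0 = 0 := Complex.ext hB hαB
      have hU1 : ∀ X : SU2, (1 : SU2) * X * (1 : SU2)⁻¹ = X := by intro X; group
      exact ⟨1, Or.inr ((isAntidiag_iff _).mpr (by rw [hU1]; exact hA0)),
        Or.inr ((isAntidiag_iff _).mpr (by rw [hU1]; exact hB0))⟩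

lemma case_mixed (A B : SU2) (hne : B * A ≠ A * B)
    (hA : (matSU A 0 0).re = 0)
    (hAB : (matSU A 0 0).im * (matSU B 0 0).im + (matSU A 0 1).re * (matSU B 0 1).re +
      (matSU A 0 1).im * (matSU B 0 1).im = 0) :
    ∃ U : SU2, InPin2 (matSU (U * A * U⁻¹)) ∧ InPin2 (matSU (U * B * U⁻¹)) := by
  set m₁ := (matSU B 0 0).im with hm₁
  set m₂ := (matSU B 0 1).re with hm₂
  set m₃ := (matSU B 0 1).im with hm₃
  have hsum : (0:ℝ) ≤ m₁ ^ 2 + m₂ ^ 2 + m₃ ^ 2 := by positivity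
  set r := Real.sqrt (m₁ ^ 2 + m₂ ^ 2 + m₃ ^ 2) with hrdef
  have hr : r ^ 2 = m₁ ^ 2 + m₂ ^ 2 + m₃ ^ 2 := Real.sq_sqrt hsum
  by_cases hpos : 0 < r + m₁
  · obtain ⟨U, hanti, hdiag⟩ := construct m₁ m₂ m₃ r hr hpos
    exact ⟨U, Or.inr ((isAntidiag_iff _).mpr (hanti A hA hAB)),
      Or.inl ((isDiag_iff _).mpr (hdiag B rfl rfl rfl))⟩
  · by_cases hzero : m₁ = 0 ∧ m₂ = 0 ∧ m₃ = 0
    · exact absurd (commute_of_scalar (Complex.ext hzero.2.1 hzero.2.2) hzero.1 A) hne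
    · have h1 : m₁ ^ 2 + m₂ ^ 2 + m₃ ^ 2 ≠ 0 := by
        intro h
        exact hzero ⟨by nlinarith [sq_nonneg m₁, sq_nonneg m₂, sq_nonneg m₃],
          by nlinarith [sq_nonneg m₁, sq_nonneg m₂, sq_nonneg m₃],
          by nlinarith [sq_nonneg m₁, sq_nonneg m₂, sq_nonneg m₃]⟩
      have hrpos : 0 < r := Real.sqrt_pos.mpr (lt_of_le_of_ne hsum (Ne.symm h1))
      have hm₁neg : m₁ ≤ -r := by linarith [not_lt.mp hpos]
      have hm₁sq : r ^ 2 ≤ m₁ ^ 2 := by nlinarith [hrpos, hm₁neg]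
      have h2sq : m₂ ^ 2 = 0 := by linarith [sq_nonneg m₂, sq_nonneg m₃, hr, hm₁sq]
      have h3sq : m₃ ^ 2 = 0 := by linarith [sq_nonneg m₂, sq_nonneg m₃, hr, hm₁sq]
      have h2 : m₂ = 0 := by
        have := sq_eq_zero_iff.mp h2sq; exact this
      have h3 : m₃ = 0 := by
        have := sq_eq_zero_iff.mp h3sq; exact this
      have hm₁ne : m₁ ≠ 0 := fun h => hzero ⟨h, h2, h3⟩
      have hαA : (matSU A 0 0).im = 0 := by
        rw [h2, h3] at hAB
        simp at hAB
        rcases hAB with h | h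
        · exact h
        · exact absurd h hm₁ne
      have hA0 : matSU A 0 0 = 0 := Complex.ext hA hαA
      have hB0 : matSU B 0 1 = 0 := Complex.ext h2 h3
      have hU1 : ∀ X : SU2, (1 : SU2) * X * (1 : SU2)⁻¹ = X := by intro X; group
      exact ⟨1, Or.inr ((isAntidiag_iff _).mpr (by rw [hU1]; exact hA0)),
        Or.inl ((isDiag_iff _).mpr (by rw [hU1]; exact hB0))⟩

/-- A pair `A, B ∈ SU(2)` is simultaneously conjugate into `Pin(2)` without commuting
iff `tr(ABA⁻¹B⁻¹) ≠ 2` and at least two of `tr A`, `tr B`, `tr(AB)` vanish. -/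
theorem pin2_characterization (A B : SU2) :
    ((∃ U : SU2, InPin2 (matSU (U * A * U⁻¹)) ∧ InPin2 (matSU (U * B * U⁻¹))) ∧
        A * B ≠ B * A) ↔
      (trSU (A * B * A⁻¹ * B⁻¹) ≠ 2 ∧
        ((trSU A = 0 ∧ trSU B = 0) ∨ (trSU A = 0 ∧ trSU (A * B) = 0) ∨
          (trSU B = 0 ∧ trSU (A * B) = 0))) := by
  constructor
  · rintro ⟨⟨U, hA, hB⟩, hne⟩
    refine ⟨fun h2 => hne ((comm_iff A B).mp h2), ?_⟩
    unfold InPin2 at hA hB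
    have trA' := trSU_conj_inv U A
    have trB' := trSU_conj_inv U B
    have trAB' := trSU_conj_inv U (A * B)
    rcases hA with hAd | hAa <;> rcases hB with hBd | hBa
    · exact absurd (conj_conj_eq (commute_of_diag ((isDiag_iff _).mp hAd)
        ((isDiag_iff _).mp hBd))) hne
    · right; right
      have hB0 : matSU (U * B * U⁻¹) 0 0 = 0 := (isAntidiag_iff _).mp hBa
      have hA1 : matSU (U * A * U⁻¹) 0 1 = 0 := (isDiag_iff _).mp hAd
      constructor
      · rw [← trB', trSU_eq, hB0]; simp
      · rw [← trAB', ← mul_conj_eq, trSU_eq, mul00, hB0, hA1]; simp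
    · right; left
      have hA0 : matSU (U * A * U⁻¹) 0 0 = 0 := (isAntidiag_iff _).mp hAa
      have hB1 : matSU (U * B * U⁻¹) 0 1 = 0 := (isDiag_iff _).mp hBd
      constructor
      · rw [← trA', trSU_eq, hA0]; simp
      · rw [← trAB', ← mul_conj_eq, trSU_eq, mul00, hA0, hB1]; simp
    · left
      have hA0 : matSU (U * A * U⁻¹) 0 0 = 0 := (isAntidiag_iff _).mp hAa
      have hB0 : matSU (U * B * U⁻¹) 0 0 = 0 := (isAntidiag_iff _).mp hBa
      constructor
      · rw [← trA', trSU_eq, hA0]; simp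
      · rw [← trB', trSU_eq, hB0]; simp
  · rintro ⟨hcomm, hcase⟩
    have hne : A * B ≠ B * A := fun h => hcomm ((comm_iff A B).mpr h)
    refine ⟨?_, hne⟩
    rcases hcase with ⟨hA, hB⟩ | ⟨hA, hAB⟩ | ⟨hB, hAB⟩
    · exact case_both_pure A B hne (by rw [trSU_eq] at hA; linarith)
        (by rw [trSU_eq] at hB; linarith)
    · have hA' : (matSU A 0 0).re = 0 := by rw [trSU_eq] at hA; linarith
      have hABre : (matSU (A * B) 0 0).re = 0 := by rw [trSU_eq] at hAB; linarith
      rw [mul00] at hABre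
      have hdot : (matSU A 0 0).im * (matSU B 0 0).im + (matSU A 0 1).re * (matSU B 0 1).re +
          (matSU A 0 1).im * (matSU B 0 1).im = 0 := by
        simp only [Complex.sub_re, Complex.mul_re, Complex.conj_re, Complex.conj_im, hA'] at hABre
        linarith
      exact case_mixed A B (fun h => hne h.symm) hA' hdot
    · have hB' : (matSU B 0 0).re = 0 := by rw [trSU_eq] at hB; linarith
      have hABre : (matSU (A * B) 0 0).re = 0 := by rw [trSU_eq] at hAB; linarith
      rw [mul00] at hABre
      have hdot : (matSU B 0 0).im * (matSU A 0 0).im + (matSU B 0 1).re * (matSU A 0 1).re +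
          (matSU B 0 1).im * (matSU A 0 1).im = 0 := by
        simp only [Complex.sub_re, Complex.mul_re, Complex.conj_re, Complex.conj_im, hB'] at hABre
        linarith
      obtain ⟨U, h1, h2⟩ := case_mixed B A hne hB' hdot
      exact ⟨U, h2, h1⟩
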